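/- For a well-formed schema S and RPQ q, the query q is unsatisfiable over S (i.e., ⟦q⟧_G = ∅ for every graph G conforming to S) if and only if the type inference judgment derives S ⊢ q : ∅. -/
import Mathlib


/-! ### Conflict-free regular expressions over unordered words -/

inductive RE (σ : Type) : Type
  | eps : RE σ
  | sym : σ → RE σ
  | union : RE σ → RE σ → RE σ
  | conc : RE σ → RE σ → RE σ
  | star : σ → RE σ
  | plus : σ → RE σ
  deriving DecidableEq

def uconc {σ : Type} (L₁ L₂ : Set (Multiset σ)) : Set (Multiset σ) :=
  {w | ∃ w₁ ∈ L₁, ∃ w₂ ∈ L₂, w = w₁ + w₂}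

def resem {σ : Type} : RE σ → Set (Multiset σ)
  | .eps => {0}
  | .sym a => {{a}}
  | .union t₁ t₂ => resem t₁ ∪ resem t₂
  | .conc t₁ t₂ => uconc (resem t₁) (resem t₂)
  | .star a => {w | ∃ n : ℕ, w = Multiset.replicate n a}
  | .plus a => {w | ∃ n : ℕ, 1 ≤ n ∧ w = Multiset.replicate n a}

def syms {σ : Type} [DecidableEq σ] : RE σ → Finset σ
  | .eps => ∅
  | .sym a => {a}
  | .union t₁ t₂ => syms t₁ ∪ syms t₂
  | .conc t₁ t₂ => syms t₁ ∪ syms t₂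
  | .star a => {a}
  | .plus a => {a}

def CF {σ : Type} [DecidableEq σ] : RE σ → Prop
  | .union t₁ t₂ => CF t₁ ∧ CF t₂ ∧ Disjoint (syms t₁) (syms t₂)
  | .conc t₁ t₂ => CF t₁ ∧ CF t₂ ∧ Disjoint (syms t₁) (syms t₂)
  | _ => True

def distr {σ : Type} : RE σ → RE σ → RE σ
  | .union A B, C => .union (distr A C) (distr B C)
  | A, .union B C => .union (distr A B) (distr A C)
  | A, B => .conc A B

def norm {σ : Type} : RE σ → RE σ
  | .eps => .eps
  | .sym a => .sym a
  | .union t₁ t₂ => .union (norm t₁) (norm t₂)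
  | .conc t₁ t₂ => distr (norm t₁) (norm t₂)
  | .star a => .star a
  | .plus a => .plus a

/-- The list of union-free clauses of a (normalized) expression. -/
def clauses {σ : Type} : RE σ → List (RE σ)
  | .union t₁ t₂ => clauses t₁ ++ clauses t₂
  | t => [t]

/-- An occurrence of symbol `a` that is *not* under a Kleene star. -/
def occursUnstarred {σ : Type} (a : σ) : RE σ → Prop
  | .eps => False
  | .sym b => b = a
  | .union t₁ t₂ => occursUnstarred a t₁ ∨ occursUnstarred a t₂
  | .conc t₁ t₂ => occursUnstarred a t₁ ∨ occursUnstarred a t₂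
  | .star _ => False
  | .plus b => b = a

/-! ### Graph schemas -/

/-- A schema element: regular expressions for incoming and outgoing edges. -/
abbrev Elem (σ : Type) := RE σ × RE σ

/-- Double normalization: each element is split into one element per pair of
union-free clauses of the DNFs of its `in` and `out` expressions. -/
def DNorm {σ : Type} [DecidableEq σ] (S : Finset (Elem σ)) : Finset (Elem σ) :=
  S.biUnion (fun e => ((clauses (norm e.1)).product (clauses (norm e.2))).toFinset)

/-- Conditions 1–3 of the definition of graph schemas: symbol closure between
incoming and outgoing expressions, and pairwise disjoint typings. -/
def IsSchema {σ : Type} [DecidableEq σ] (S : Finset (Elem σ)) : Prop :=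
  (∀ e ∈ S, CF e.1 ∧ CF e.2) ∧
  (∀ e ∈ S, ∀ a ∈ syms e.1, ∃ e' ∈ S, a ∈ syms e'.2) ∧
  (∀ e ∈ S, ∀ a ∈ syms e.2, ∃ e' ∈ S, a ∈ syms e'.1) ∧
  (∀ e ∈ S, ∀ e' ∈ S, e ≠ e' →
    resem e.1 ∩ resem e'.1 = ∅ ∨ resem e.2 ∩ resem e'.2 = ∅)

/-- Well-formedness: whenever a symbol occurs in the `out` (resp. `in`)
expressions of two distinct elements of `DNorm S`, every occurrence of it in an
`in` (resp. `out`) expression of `DNorm S` is under a star. -/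
def WellFormed {σ : Type} [DecidableEq σ] (S : Finset (Elem σ)) : Prop :=
  (∀ a : σ, (∃ e₁ ∈ DNorm S, ∃ e₂ ∈ DNorm S, e₁ ≠ e₂ ∧
      a ∈ syms e₁.2 ∧ a ∈ syms e₂.2) →
    ∀ e ∈ DNorm S, ¬ occursUnstarred a e.1) ∧
  (∀ a : σ, (∃ e₁ ∈ DNorm S, ∃ e₂ ∈ DNorm S, e₁ ≠ e₂ ∧
      a ∈ syms e₁.1 ∧ a ∈ syms e₂.1) →
    ∀ e ∈ DNorm S, ¬ occursUnstarred a e.2)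

/-! ### Data graphs and conformance -/

def inLabels {V σ : Type} [DecidableEq V] (E : Finset (V × σ × V)) (v : V) :
    Multiset σ :=
  ((E.filter (fun t => t.2.2 = v)).val.map (fun t => t.2.1))

def outLabels {V σ : Type} [DecidableEq V] (E : Finset (V × σ × V)) (v : V) :
    Multiset σ :=
  ((E.filter (fun t => t.1 = v)).val.map (fun t => t.2.1))

/-- A node has type `e` if its incoming/outgoing label multisets belong to the
languages of `e`. -/
def HasType {V σ : Type} [DecidableEq V] (E : Finset (V × σ × V)) (v : V)
    (e : Elem σ) : Prop :=
  inLabels E v ∈ resem e.1 ∧ outLabels E v ∈ resem e.2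

/-- A graph conforms to a schema if every node is typed by some element. -/
def Conforms {V σ : Type} [DecidableEq V] (E : Finset (V × σ × V))
    (S : Finset (Elem σ)) : Prop :=
  ∀ v : V, ∃ e ∈ S, HasType E v e

/-! ### RPQs, NREs, and their semantics -/

inductive RPQ (σ : Type) : Type
  | eps : RPQ σ
  | sym : σ → RPQ σ
  | union : RPQ σ → RPQ σ → RPQ σ
  | conc : RPQ σ → RPQ σ → RPQ σ
  | star : RPQ σ → RPQ σ

inductive NRE (σ : Type) : Type
  | eps : NRE σ
  | sym : σ → NRE σ
  | back : σ → NRE σ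
  | union : NRE σ → NRE σ → NRE σ
  | conc : NRE σ → NRE σ → NRE σ
  | star : NRE σ → NRE σ
  | test : NRE σ → NRE σ

/-- Composition of binary relations given as sets of pairs. -/
def relComp {α : Type} (R₁ R₂ : Set (α × α)) : Set (α × α) :=
  {p | ∃ m, (p.1, m) ∈ R₁ ∧ (m, p.2) ∈ R₂}

/-- `n`-fold composition, with the full identity relation as base. -/
def powRel {α : Type} (R : Set (α × α)) : ℕ → Set (α × α)
  | 0 => {p | p.1 = p.2}
  | n + 1 => relComp (powRel R n) R

/-- Semantics of RPQs on a graph with edge set `E`. -/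
def rpqSem {V σ : Type} (E : Set (V × σ × V)) : RPQ σ → Set (V × V)
  | .eps => {p | p.1 = p.2}
  | .sym a => {p | (p.1, a, p.2) ∈ E}
  | .union r₁ r₂ => rpqSem E r₁ ∪ rpqSem E r₂
  | .conc r₁ r₂ => relComp (rpqSem E r₁) (rpqSem E r₂)
  | .star r => ⋃ i : ℕ, powRel (rpqSem E r) i

/-- Semantics of NREs on a graph with edge set `E`. -/
def nreSem {V σ : Type} (E : Set (V × σ × V)) : NRE σ → Set (V × V)
  | .eps => {p | p.1 = p.2}
  | .sym a => {p | (p.1, a, p.2) ∈ E}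
  | .back a => {p | (p.2, a, p.1) ∈ E}
  | .union n₁ n₂ => nreSem E n₁ ∪ nreSem E n₂
  | .conc n₁ n₂ => relComp (nreSem E n₁) (nreSem E n₂)
  | .star n => ⋃ i : ℕ, powRel (nreSem E n) i
  | .test n => {p | p.1 = p.2 ∧ ∃ v, (p.1, v) ∈ nreSem E n}

/-! ### Type inference -/

/-- The identity relation on the elements of a schema. -/
def relId {σ : Type} (S : Finset (Elem σ)) : Set (Elem σ × Elem σ) :=
  {p | p.1 ∈ S ∧ p.1 = p.2}

/-- `n`-fold composition with the identity on `S` as base. -/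
def spowRel {σ : Type} (S : Finset (Elem σ)) (R : Set (Elem σ × Elem σ)) :
    ℕ → Set (Elem σ × Elem σ)
  | 0 => relId S
  | n + 1 => relComp (spowRel S R n) R

/-- Type inference for RPQs. -/
def rpqInf {σ : Type} [DecidableEq σ] (S : Finset (Elem σ)) :
    RPQ σ → Set (Elem σ × Elem σ)
  | .eps => relId S
  | .sym a => {p | p.1 ∈ S ∧ p.2 ∈ S ∧ a ∈ syms p.1.2 ∧ a ∈ syms p.2.1}
  | .union r₁ r₂ => rpqInf S r₁ ∪ rpqInf S r₂
  | .conc r₁ r₂ => relComp (rpqInf S r₁) (rpqInf S r₂)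
  | .star r => ⋃ i : ℕ, spowRel S (rpqInf S r) i

/-- `first` of a set of element pairs. -/
def firstOf {σ : Type} (R : Set (Elem σ × Elem σ)) : Set (Elem σ) :=
  {e | ∃ e', (e, e') ∈ R}

/-- Type inference for NREs. -/
def nreInf {σ : Type} [DecidableEq σ] (S : Finset (Elem σ)) :
    NRE σ → Set (Elem σ × Elem σ)
  | .eps => relId S
  | .sym a => {p | p.1 ∈ S ∧ p.2 ∈ S ∧ a ∈ syms p.1.2 ∧ a ∈ syms p.2.1}
  | .back a => {p | p.1 ∈ S ∧ p.2 ∈ S ∧ a ∈ syms p.1.1 ∧ a ∈ syms p.2.2}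
  | .union n₁ n₂ => nreInf S n₁ ∪ nreInf S n₂
  | .conc n₁ n₂ => relComp (nreInf S n₁) (nreInf S n₂)
  | .star n => ⋃ i : ℕ, spowRel S (nreInf S n) i
  | .test n => {p | p.1 ∈ firstOf (nreInf S n) ∧ p.2 ∈ firstOf (nreInf S n)}

/-! ### Paths -/

/-- `GConnects E p u v`: path `p` (a word over `σ`) connects node `u` to `v`. -/
inductive GConnects {V σ : Type} (E : Set (V × σ × V)) : List σ → V → V → Prop
  | nil (u : V) : GConnects E [] u u
  | cons {u u' v : V} {a : σ} {p : List σ} :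
      (u, a, u') ∈ E → GConnects E p u' v → GConnects E (a :: p) u v

/-- The language of paths that can match an RPQ. -/
def pathsOf {σ : Type} : RPQ σ → Set (List σ)
  | .eps => {[]}
  | .sym a => {[a]}
  | .union q₁ q₂ => pathsOf q₁ ∪ pathsOf q₂
  | .conc q₁ q₂ => {p | ∃ p₁ ∈ pathsOf q₁, ∃ p₂ ∈ pathsOf q₂, p = p₁ ++ p₂}
  | .star q => {p | ∃ l : List (List σ), (∀ x ∈ l, x ∈ pathsOf q) ∧ p = l.flatten}

/-- `SConnects S p e₁ e₂`: path `p` connects schema element `e₁` to `e₂` over `S`. -/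
inductive SConnects {σ : Type} [DecidableEq σ] (S : Finset (Elem σ)) :
    List σ → Elem σ → Elem σ → Prop
  | nil (e : Elem σ) : SConnects S [] e e
  | cons {e₀ e eₜ : Elem σ} {a : σ} {p : List σ} :
      e ∈ S → a ∈ syms e₀.2 → a ∈ syms e.1 →
      SConnects S p e eₜ → SConnects S (a :: p) e₀ eₜ

/-- The edge relation of a finite graph, as a set. -/
def edgeSet {V σ : Type} (E : Finset (V × σ × V)) : Set (V × σ × V) := ↑E

/-! ### Auxiliary development -/

section Aux

variable {σ : Type} [DecidableEq σ]

/-- Union-free regular expressions. -/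
inductive UFree {σ : Type} : RE σ → Prop
  | eps : UFree .eps
  | sym (a : σ) : UFree (.sym a)
  | conc {t₁ t₂ : RE σ} : UFree t₁ → UFree t₂ → UFree (.conc t₁ t₂)
  | star (a : σ) : UFree (.star a)
  | plus (a : σ) : UFree (.plus a)

/-- Allowed multiplicities of a symbol in a (union-free) expression. -/
def ivl {σ : Type} [DecidableEq σ] : RE σ → σ → Set ℕ
  | .eps, _ => {0}
  | .sym b, a => if a = b then {1} else {0}
  | .union _ _, _ => {0}
  | .conc t₁ t₂, a => {n | ∃ m₁ ∈ ivl t₁ a, ∃ m₂ ∈ ivl t₂ a, n = m₁ + m₂}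
  | .star b, a => if a = b then Set.univ else {0}
  | .plus b, a => if a = b then {n | 1 ≤ n} else {0}

lemma mem_resem_iff_count {t : RE σ} (ht : UFree t) (w : Multiset σ) :
    w ∈ resem t ↔ ∀ a, w.count a ∈ ivl t a := by
  induction ht generalizing w with
  | eps =>
    simp only [resem, ivl, Set.mem_singleton_iff]
    constructor
    · rintro rfl a; simp
    · intro h; ext a; simpa using h a
  | sym b =>
    simp only [resem, ivl, Set.mem_singleton_iff]
    constructor
    · rintro rfl a; by_cases h : a = b <;> simp [Multiset.count_singleton, h]
    · intro h; ext a
      have := h a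
      by_cases hab : a = b <;> simp_all [Multiset.count_singleton]
  | star b =>
    simp only [resem, ivl, Set.mem_setOf_eq]
    constructor
    · rintro ⟨n, rfl⟩ a
      by_cases hab : a = b
      · simp [Multiset.count_replicate, hab]
      · simp [Multiset.count_replicate, hab, Ne.symm hab]
    · intro h
      refine ⟨w.count b, ?_⟩
      ext a
      by_cases hab : a = b
      · subst hab; simp [Multiset.count_replicate]
      · have := h a
        simp only [if_neg hab, Set.mem_singleton_iff] at this
        simp [Multiset.count_replicate, hab, Ne.symm hab, this]
  | plus b =>
    simp only [resem, ivl, Set.mem_setOf_eq]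
    constructor
    · rintro ⟨n, hn, rfl⟩ a
      by_cases hab : a = b
      · simp [Multiset.count_replicate, hab, hn]
      · simp [Multiset.count_replicate, hab, Ne.symm hab]
    · intro h
      refine ⟨w.count b, ?_, ?_⟩
      · have := h b; simpa using this
      · ext a
        by_cases hab : a = b
        · subst hab; simp [Multiset.count_replicate]
        · have := h a
          simp only [if_neg hab, Set.mem_singleton_iff] at this
          simp [Multiset.count_replicate, hab, Ne.symm hab, this]
  | @conc t₁ t₂ h₁ h₂ ih₁ ih₂ =>
    simp only [resem, uconc, Set.mem_setOf_eq, ivl]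
    constructor
    · rintro ⟨w₁, hw₁, w₂, hw₂, rfl⟩ a
      exact ⟨w₁.count a, (ih₁ w₁).1 hw₁ a, w₂.count a, (ih₂ w₂).1 hw₂ a,
        (Multiset.count_add a w₁ w₂)⟩
    · intro h
      choose m₁ hm₁ m₂ hm₂ hsum using h
      set w₁ : Multiset σ := ∑ a ∈ w.toFinset, Multiset.replicate (m₁ a) a with hw₁def
      have hcount₁ : ∀ b, w₁.count b = if b ∈ w.toFinset then m₁ b else 0 := by
        intro b
        rw [hw₁def, Multiset.count_sum']
        rw [Finset.sum_congr rfl (fun a _ => Multiset.count_replicate b a (m₁ a))]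
        simp [Finset.sum_ite_eq]
      have hle : w₁ ≤ w := by
        rw [Multiset.le_iff_count]
        intro b
        rw [hcount₁ b]
        by_cases hb : b ∈ w.toFinset
        · simp only [if_pos hb]
          rw [hsum b]; omega
        · simp [hb]
      refine ⟨w₁, ?_, w - w₁, ?_, ?_⟩
      · rw [ih₁]
        intro b
        rw [hcount₁ b]
        by_cases hb : b ∈ w.toFinset
        · simp only [if_pos hb]; exact hm₁ b
        · simp only [if_neg hb]
          have hb0 : w.count b = 0 := by
            simpa [Multiset.count_eq_zero] using hb
          have : m₁ b = 0 := by have := hsum b; omega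
          rw [← this]; exact hm₁ b
      · rw [ih₂]
        intro b
        have hcsub : (w - w₁).count b = w.count b - w₁.count b :=
          Multiset.count_sub b w w₁
        rw [hcsub, hcount₁ b]
        by_cases hb : b ∈ w.toFinset
        · simp only [if_pos hb]
          have : w.count b - m₁ b = m₂ b := by have := hsum b; omega
          rw [this]; exact hm₂ b
        · simp only [if_neg hb]
          have hb0 : w.count b = 0 := by
            simpa [Multiset.count_eq_zero] using hb
          have heq : w.count b - 0 = m₂ b := by have := hsum b; omega
          rw [heq]; exact hm₂ b
      · exact (add_tsub_cancel_of_le hle).symm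

lemma zero_mem_ivl {t : RE σ} {a : σ} (h : a ∉ syms t) : (0 : ℕ) ∈ ivl t a := by
  induction t with
  | eps => simp [ivl]
  | sym b => simp only [syms, Finset.mem_singleton] at h; simp [ivl, h]
  | union t₁ t₂ ih₁ ih₂ => simp [ivl]
  | conc t₁ t₂ ih₁ ih₂ =>
    simp only [syms, Finset.mem_union, not_or] at h
    exact ⟨0, ih₁ h.1, 0, ih₂ h.2, rfl⟩
  | star b => simp only [syms, Finset.mem_singleton] at h; simp [ivl, h]
  | plus b => simp only [syms, Finset.mem_singleton] at h; simp [ivl, h]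

lemma one_mem_ivl {t : RE σ} (ht : UFree t) (hcf : CF t) {a : σ}
    (h : a ∈ syms t) : (1 : ℕ) ∈ ivl t a := by
  induction ht with
  | eps => simp [syms] at h
  | sym b => simp only [syms, Finset.mem_singleton] at h; simp [ivl, h]
  | star b => simp only [syms, Finset.mem_singleton] at h; simp [ivl, h]
  | plus b => simp only [syms, Finset.mem_singleton] at h; simp [ivl, h]
  | @conc t₁ t₂ h₁ h₂ ih₁ ih₂ =>
    obtain ⟨hcf₁, hcf₂, hdisj⟩ := hcf
    simp only [syms, Finset.mem_union] at h
    rcases h with h | h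
    · have h2 : a ∉ syms t₂ := fun hc => (Finset.disjoint_left.1 hdisj h) hc
      exact ⟨1, ih₁ hcf₁ h, 0, zero_mem_ivl h2, rfl⟩
    · have h1 : a ∉ syms t₁ := fun hc => (Finset.disjoint_left.1 hdisj hc) h
      exact ⟨0, zero_mem_ivl h1, 1, ih₂ hcf₂ h, (zero_add 1).symm⟩

lemma mem_ivl_of_unstarred {t : RE σ} (ht : UFree t) (hcf : CF t) {a : σ}
    (h : a ∈ syms t) (hns : ¬ occursUnstarred a t) (n : ℕ) : n ∈ ivl t a := by
  induction ht with
  | eps => simp [syms] at h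
  | sym b =>
    simp only [syms, Finset.mem_singleton] at h
    exact absurd h.symm hns
  | star b => simp only [syms, Finset.mem_singleton] at h; simp [ivl, h]
  | plus b =>
    simp only [syms, Finset.mem_singleton] at h
    exact absurd h.symm hns
  | @conc t₁ t₂ h₁ h₂ ih₁ ih₂ =>
    obtain ⟨hcf₁, hcf₂, hdisj⟩ := hcf
    simp only [occursUnstarred, not_or] at hns
    simp only [syms, Finset.mem_union] at h
    rcases h with h | h
    · have h2 : a ∉ syms t₂ := fun hc => (Finset.disjoint_left.1 hdisj h) hc
      exact ⟨n, ih₁ hcf₁ h hns.1, 0, zero_mem_ivl h2, rfl⟩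
    · have h1 : a ∉ syms t₁ := fun hc => (Finset.disjoint_left.1 hdisj hc) h
      exact ⟨0, zero_mem_ivl h1, n, ih₂ hcf₂ h hns.2, (zero_add n).symm⟩

/-! #### Normalization lemmas -/

lemma uconc_union_left {σ : Type} (X Y Z : Set (Multiset σ)) :
    uconc (X ∪ Y) Z = uconc X Z ∪ uconc Y Z := by
  ext w
  simp only [uconc, Set.mem_setOf_eq, Set.mem_union]
  constructor
  · rintro ⟨w₁, (h | h), w₂, h₂, rfl⟩
    · exact Or.inl ⟨w₁, h, w₂, h₂, rfl⟩
    · exact Or.inr ⟨w₁, h, w₂, h₂, rfl⟩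
  · rintro (⟨w₁, h, w₂, h₂, rfl⟩ | ⟨w₁, h, w₂, h₂, rfl⟩)
    · exact ⟨w₁, Or.inl h, w₂, h₂, rfl⟩
    · exact ⟨w₁, Or.inr h, w₂, h₂, rfl⟩

lemma uconc_union_right {σ : Type} (X Y Z : Set (Multiset σ)) :
    uconc X (Y ∪ Z) = uconc X Y ∪ uconc X Z := by
  ext w
  simp only [uconc, Set.mem_setOf_eq, Set.mem_union]
  constructor
  · rintro ⟨w₁, h, w₂, (h₂ | h₂), rfl⟩
    · exact Or.inl ⟨w₁, h, w₂, h₂, rfl⟩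
    · exact Or.inr ⟨w₁, h, w₂, h₂, rfl⟩
  · rintro (⟨w₁, h, w₂, h₂, rfl⟩ | ⟨w₁, h, w₂, h₂, rfl⟩)
    · exact ⟨w₁, h, w₂, Or.inl h₂, rfl⟩
    · exact ⟨w₁, h, w₂, Or.inr h₂, rfl⟩

lemma resem_distr {σ : Type} :
    ∀ A B : RE σ, resem (distr A B) = uconc (resem A) (resem B) := by
  intro A
  induction A with
  | union A₁ A₂ ih₁ ih₂ =>
    intro B
    simp only [distr, resem, ih₁, ih₂, uconc_union_left]
  | eps =>
    intro B
    induction B with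
    | union B₁ B₂ ihB₁ ihB₂ => simp [distr, resem, ihB₁, ihB₂, uconc_union_right]
    | _ => simp [distr, resem]
  | sym a =>
    intro B
    induction B with
    | union B₁ B₂ ihB₁ ihB₂ => simp [distr, resem, ihB₁, ihB₂, uconc_union_right]
    | _ => simp [distr, resem]
  | conc A₁ A₂ ih₁ ih₂ =>
    intro B
    induction B with
    | union B₁ B₂ ihB₁ ihB₂ => simp [distr, resem, ihB₁, ihB₂, uconc_union_right]
    | _ => simp [distr, resem]
  | star a =>
    intro B
    induction B with
    | union B₁ B₂ ihB₁ ihB₂ => simp [distr, resem, ihB₁, ihB₂, uconc_union_right]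
    | _ => simp [distr, resem]
  | plus a =>
    intro B
    induction B with
    | union B₁ B₂ ihB₁ ihB₂ => simp [distr, resem, ihB₁, ihB₂, uconc_union_right]
    | _ => simp [distr, resem]

lemma resem_norm {σ : Type} (t : RE σ) : resem (norm t) = resem t := by
  induction t with
  | eps => rfl
  | sym a => rfl
  | union t₁ t₂ ih₁ ih₂ =>
    exact (by rw [ih₁, ih₂] :
      resem (_root_.norm t₁) ∪ resem (_root_.norm t₂) = resem t₁ ∪ resem t₂)
  | conc t₁ t₂ ih₁ ih₂ =>
    exact (resem_distr (_root_.norm t₁) (_root_.norm t₂)).trans (by rw [ih₁, ih₂]; rfl)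
  | star a => rfl
  | plus a => rfl

lemma syms_distr {σ : Type} [DecidableEq σ] :
    ∀ A B : RE σ, syms (distr A B) = syms A ∪ syms B := by
  intro A
  induction A with
  | union A₁ A₂ ih₁ ih₂ =>
    intro B
    ext a
    simp [distr, syms, ih₁, ih₂] <;> tauto
  | _ =>
    intro B
    induction B with
    | union B₁ B₂ ihB₁ ihB₂ =>
      ext a
      simp [distr, syms, ihB₁, ihB₂] <;> tauto
    | _ => ext a; simp [distr, syms] <;> tauto

lemma syms_norm {σ : Type} [DecidableEq σ] (t : RE σ) : syms (norm t) = syms t := by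
  induction t with
  | eps => rfl
  | sym a => rfl
  | union t₁ t₂ ih₁ ih₂ =>
    exact (by rw [ih₁, ih₂] :
      syms (_root_.norm t₁) ∪ syms (_root_.norm t₂) = syms t₁ ∪ syms t₂)
  | conc t₁ t₂ ih₁ ih₂ =>
    exact (syms_distr (_root_.norm t₁) (_root_.norm t₂)).trans (by rw [ih₁, ih₂]; rfl)
  | star a => rfl
  | plus a => rfl

lemma clauses_ne_nil {σ : Type} (t : RE σ) : clauses t ≠ [] := by
  induction t with
  | union t₁ t₂ ih₁ ih₂ => simp only [clauses]; exact fun h => ih₁ (List.append_eq_nil_iff.1 h).1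
  | eps => simp [clauses]
  | sym a => simp [clauses]
  | conc t₁ t₂ _ _ => simp [clauses]
  | star a => simp [clauses]
  | plus a => simp [clauses]

lemma resem_clause_subset {σ : Type} {t c : RE σ} (h : c ∈ clauses t) :
    resem c ⊆ resem t := by
  induction t with
  | union t₁ t₂ ih₁ ih₂ =>
    simp only [clauses, List.mem_append] at h
    rcases h with h | h
    · exact (ih₁ h).trans (Set.subset_union_left)
    · exact (ih₂ h).trans (Set.subset_union_right)
  | eps => simp only [clauses, List.mem_singleton] at h; subst h; rfl
  | sym a => simp only [clauses, List.mem_singleton] at h; subst h; rfl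
  | conc t₁ t₂ _ _ => simp only [clauses, List.mem_singleton] at h; subst h; rfl
  | star a => simp only [clauses, List.mem_singleton] at h; subst h; rfl
  | plus a => simp only [clauses, List.mem_singleton] at h; subst h; rfl

lemma syms_clause_subset {σ : Type} [DecidableEq σ] {t c : RE σ}
    (h : c ∈ clauses t) : syms c ⊆ syms t := by
  induction t with
  | union t₁ t₂ ih₁ ih₂ =>
    simp only [clauses, List.mem_append] at h
    rcases h with h | h
    · exact (ih₁ h).trans (by simp [syms])
    · exact (ih₂ h).trans (by simp [syms])
  | eps => simp only [clauses, List.mem_singleton] at h; subst h; exact Finset.Subset.refl _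
  | sym a => simp only [clauses, List.mem_singleton] at h; subst h; exact Finset.Subset.refl _
  | conc t₁ t₂ _ _ =>
    simp only [clauses, List.mem_singleton] at h; subst h; exact Finset.Subset.refl _
  | star a => simp only [clauses, List.mem_singleton] at h; subst h; exact Finset.Subset.refl _
  | plus a => simp only [clauses, List.mem_singleton] at h; subst h; exact Finset.Subset.refl _

/-- Clauses of `distr` of two "good DNFs" are good. -/
lemma clauses_distr_good {σ : Type} [DecidableEq σ] :
    ∀ A B : RE σ,
      (∀ c ∈ clauses A, UFree c ∧ CF c) →
      (∀ c ∈ clauses B, UFree c ∧ CF c) →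
      Disjoint (syms A) (syms B) →
      ∀ c ∈ clauses (distr A B), UFree c ∧ CF c := by
  have base : ∀ A B : RE σ, clauses A = [A] → clauses B = [B] →
      (∀ c ∈ clauses A, UFree c ∧ CF c) →
      (∀ c ∈ clauses B, UFree c ∧ CF c) →
      Disjoint (syms A) (syms B) →
      ∀ c ∈ [RE.conc A B], UFree c ∧ CF c := by
    intro A B hA hB h₁ h₂ hd c hc
    simp only [List.mem_singleton] at hc
    subst hc
    obtain ⟨uA, cfA⟩ := h₁ A (by rw [hA]; simp)
    obtain ⟨uB, cfB⟩ := h₂ B (by rw [hB]; simp)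
    exact ⟨UFree.conc uA uB, cfA, cfB, hd⟩
  intro A
  induction A with
  | union A₁ A₂ ih₁ ih₂ =>
    intro B h₁ h₂ hd c hc
    simp only [distr, clauses, List.mem_append] at hc
    have hm₁ : ∀ c ∈ clauses A₁, UFree c ∧ CF c := fun c hc =>
      h₁ c (by simp only [clauses, List.mem_append]; exact Or.inl hc)
    have hm₂ : ∀ c ∈ clauses A₂, UFree c ∧ CF c := fun c hc =>
      h₁ c (by simp only [clauses, List.mem_append]; exact Or.inr hc)
    have hd₁ : Disjoint (syms A₁) (syms B) :=
      Finset.disjoint_of_subset_left (by simp [syms]) hd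
    have hd₂ : Disjoint (syms A₂) (syms B) :=
      Finset.disjoint_of_subset_left (by simp [syms]) hd
    rcases hc with hc | hc
    · exact ih₁ B hm₁ h₂ hd₁ c hc
    · exact ih₂ B hm₂ h₂ hd₂ c hc
  | _ =>
    intro B
    induction B with
    | union B₁ B₂ ihB₁ ihB₂ =>
      intro h₁ h₂ hd c hc
      simp only [distr, clauses, List.mem_append] at hc
      have hm₁ : ∀ c ∈ clauses B₁, UFree c ∧ CF c := fun c hc =>
        h₂ c (by simp only [clauses, List.mem_append]; exact Or.inl hc)
      have hm₂ : ∀ c ∈ clauses B₂, UFree c ∧ CF c := fun c hc =>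
        h₂ c (by simp only [clauses, List.mem_append]; exact Or.inr hc)
      have hd₁ : Disjoint (syms _) (syms B₁) :=
        Finset.disjoint_of_subset_right (by simp [syms]) hd
      have hd₂ : Disjoint (syms _) (syms B₂) :=
        Finset.disjoint_of_subset_right (by simp [syms]) hd
      rcases hc with hc | hc
      · exact ihB₁ h₁ hm₁ hd₁ c hc
      · exact ihB₂ h₁ hm₂ hd₂ c hc
    | _ =>
      intro h₁ h₂ hd c hc
      refine base _ _ ?_ ?_ h₁ h₂ hd c ?_
      · rfl
      · rfl
      · simpa [distr, clauses] using hc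

/-- Every symbol of `t` occurs in some clause of `t`. -/
lemma clauses_cover {σ : Type} [DecidableEq σ] {t : RE σ} {a : σ}
    (h : a ∈ syms t) : ∃ c ∈ clauses t, a ∈ syms c := by
  induction t with
  | union t₁ t₂ ih₁ ih₂ =>
    simp only [syms, Finset.mem_union] at h
    rcases h with h | h
    · obtain ⟨c, hc, hac⟩ := ih₁ h
      exact ⟨c, by simp only [clauses, List.mem_append]; exact Or.inl hc, hac⟩
    · obtain ⟨c, hc, hac⟩ := ih₂ h
      exact ⟨c, by simp only [clauses, List.mem_append]; exact Or.inr hc, hac⟩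
  | eps => exact ⟨_, by simp [clauses], h⟩
  | sym b => exact ⟨_, by simp [clauses], h⟩
  | conc t₁ t₂ _ _ => exact ⟨_, by simp [clauses], h⟩
  | star b => exact ⟨_, by simp [clauses], h⟩
  | plus b => exact ⟨_, by simp [clauses], h⟩

/-- Clauses of the normal form of a conflict-free expression are union-free
and conflict-free. -/
lemma clauses_norm_good {σ : Type} [DecidableEq σ] {t : RE σ} (hcf : CF t) :
    ∀ c ∈ clauses (norm t), UFree c ∧ CF c := by
  induction t with
  | union t₁ t₂ ih₁ ih₂ =>
    intro c hc
    have hc' : c ∈ clauses (_root_.norm t₁) ++ clauses (_root_.norm t₂) := hc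
    rcases List.mem_append.1 hc' with h | h
    · exact ih₁ hcf.1 c h
    · exact ih₂ hcf.2.1 c h
  | eps =>
    intro c hc
    have hc' : c ∈ ([RE.eps] : List (RE σ)) := hc
    simp only [List.mem_singleton] at hc'; subst hc'
    exact ⟨UFree.eps, trivial⟩
  | sym b =>
    intro c hc
    have hc' : c ∈ ([RE.sym b] : List (RE σ)) := hc
    simp only [List.mem_singleton] at hc'; subst hc'
    exact ⟨UFree.sym b, trivial⟩
  | star b =>
    intro c hc
    have hc' : c ∈ ([RE.star b] : List (RE σ)) := hc
    simp only [List.mem_singleton] at hc'; subst hc'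
    exact ⟨UFree.star b, trivial⟩
  | plus b =>
    intro c hc
    have hc' : c ∈ ([RE.plus b] : List (RE σ)) := hc
    simp only [List.mem_singleton] at hc'; subst hc'
    exact ⟨UFree.plus b, trivial⟩
  | conc t₁ t₂ ih₁ ih₂ =>
    intro c hc
    have hd : Disjoint (syms (_root_.norm t₁)) (syms (_root_.norm t₂)) := by
      rw [syms_norm, syms_norm]; exact hcf.2.2
    exact clauses_distr_good _ _ (ih₁ hcf.1) (ih₂ hcf.2.1) hd c hc

/-- The syms of a clause of the normal form are among the syms of `t`. -/
lemma syms_clause_norm_subset {σ : Type} [DecidableEq σ] {t c : RE σ}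
    (h : c ∈ clauses (norm t)) : syms c ⊆ syms t := by
  have := syms_clause_subset h
  rwa [syms_norm] at this

/-- The language of a clause of the normal form is inside the language of `t`. -/
lemma resem_clause_norm_subset {σ : Type} {t c : RE σ}
    (h : c ∈ clauses (norm t)) : resem c ⊆ resem t := by
  have := resem_clause_subset h
  rwa [resem_norm] at this

/-- Every symbol of `t` occurs in some clause of the normal form. -/
lemma clauses_norm_cover {σ : Type} [DecidableEq σ] {t : RE σ} {a : σ}
    (h : a ∈ syms t) : ∃ c ∈ clauses (norm t), a ∈ syms c :=
  clauses_cover (by rwa [syms_norm])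

/-! #### DNorm membership -/

lemma mem_DNorm_iff {σ : Type} [DecidableEq σ] {S : Finset (Elem σ)}
    {d : Elem σ} :
    d ∈ DNorm S ↔ ∃ e ∈ S, d.1 ∈ clauses (norm e.1) ∧ d.2 ∈ clauses (norm e.2) := by
  obtain ⟨d₁, d₂⟩ := d
  simp only [DNorm, Finset.mem_biUnion, List.mem_toFinset]
  constructor
  · rintro ⟨e, he, hd⟩
    rw [List.pair_mem_product] at hd
    exact ⟨e, he, hd.1, hd.2⟩
  · rintro ⟨e, he, h1, h2⟩
    exact ⟨e, he, List.pair_mem_product.2 ⟨h1, h2⟩⟩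

/-! #### Relation composition lemmas -/

lemma relComp_assoc {α : Type} (R₁ R₂ R₃ : Set (α × α)) :
    relComp (relComp R₁ R₂) R₃ = relComp R₁ (relComp R₂ R₃) := by
  ext ⟨x, y⟩
  simp only [relComp, Set.mem_setOf_eq]
  constructor
  · rintro ⟨m, ⟨n, h1, h2⟩, h3⟩
    exact ⟨n, h1, m, h2, h3⟩
  · rintro ⟨n, h1, m, h2, h3⟩
    exact ⟨m, ⟨n, h1, h2⟩, h3⟩

lemma powRel_succ_left {α : Type} (R : Set (α × α)) (n : ℕ) :
    powRel R (n + 1) = relComp R (powRel R n) := by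
  induction n with
  | zero =>
    ext ⟨x, y⟩
    simp only [powRel, relComp, Set.mem_setOf_eq]
    constructor
    · rintro ⟨m, rfl, h⟩; exact ⟨y, h, rfl⟩
    · rintro ⟨m, h, rfl⟩; exact ⟨x, rfl, h⟩
  | succ n ih =>
    show relComp (powRel R (n + 1)) R = relComp R (powRel R (n + 1))
    conv_lhs => rw [ih]
    rw [relComp_assoc]
    rfl

lemma GConnects_append {V σ : Type} {E : Set (V × σ × V)} {p₁ p₂ : List σ}
    {u m v : V} (h₁ : GConnects E p₁ u m) (h₂ : GConnects E p₂ m v) :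
    GConnects E (p₁ ++ p₂) u v := by
  induction h₁ with
  | nil => exact h₂
  | cons he _ ih => exact GConnects.cons he (ih h₂)

lemma GConnects_append_split {V σ : Type} {E : Set (V × σ × V)} {p₁ p₂ : List σ}
    {u v : V} (h : GConnects E (p₁ ++ p₂) u v) :
    ∃ m, GConnects E p₁ u m ∧ GConnects E p₂ m v := by
  induction p₁ generalizing u with
  | nil => exact ⟨u, GConnects.nil u, h⟩
  | cons a p₁ ih =>
    cases h with
    | cons he h' =>
      obtain ⟨m, hm1, hm2⟩ := ih h'
      exact ⟨m, GConnects.cons he hm1, hm2⟩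

lemma powRel_to_list {V σ : Type} {E : Set (V × σ × V)} {R : Set (V × V)}
    {P : Set (List σ)}
    (hsem : ∀ u v : V, (u, v) ∈ R → ∃ p ∈ P, GConnects E p u v) :
    ∀ (i : ℕ) (u v : V), (u, v) ∈ powRel R i →
      ∃ l : List (List σ), (∀ x ∈ l, x ∈ P) ∧ GConnects E l.flatten u v := by
  intro i
  induction i with
  | zero =>
    intro u v h
    have huv : u = v := h
    subst huv
    exact ⟨[], by simp, GConnects.nil u⟩
  | succ i ih =>
    intro u v h
    obtain ⟨m, h1, h2⟩ := h
    obtain ⟨l, hl, hc⟩ := ih u m h1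
    obtain ⟨p, hp, hcp⟩ := hsem m v h2
    refine ⟨l ++ [p], ?_, ?_⟩
    · intro x hx
      rcases List.mem_append.1 hx with hx | hx
      · exact hl x hx
      · simp only [List.mem_singleton] at hx; subst hx; exact hp
    · rw [List.flatten_append]
      exact GConnects_append hc (GConnects_append hcp (GConnects.nil v))

lemma list_to_powRel {V σ : Type} {E : Set (V × σ × V)} {R : Set (V × V)}
    {P : Set (List σ)}
    (hsem : ∀ (p : List σ) (u v : V), p ∈ P → GConnects E p u v → (u, v) ∈ R) :
    ∀ (l : List (List σ)) (u v : V), (∀ x ∈ l, x ∈ P) →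
      GConnects E l.flatten u v → ∃ i, (u, v) ∈ powRel R i := by
  intro l
  induction l with
  | nil =>
    intro u v _ hc
    cases hc
    exact ⟨0, rfl⟩
  | cons hd l ih =>
    intro u v hl hc
    rw [List.flatten_cons] at hc
    obtain ⟨m, hm1, hm2⟩ := GConnects_append_split hc
    obtain ⟨i, hi⟩ := ih m v (fun x hx => hl x (by simp [hx])) hm2
    refine ⟨i + 1, ?_⟩
    rw [powRel_succ_left]
    exact ⟨m, hsem hd u m (hl hd (by simp)) hm1, hi⟩

/-- Semantics of RPQs in terms of connecting paths. -/
lemma rpqSem_iff_path {V σ : Type} (E : Set (V × σ × V)) (q : RPQ σ)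
    (u v : V) :
    (u, v) ∈ rpqSem E q ↔ ∃ p ∈ pathsOf q, GConnects E p u v := by
  induction q generalizing u v with
  | eps =>
    simp only [rpqSem, pathsOf, Set.mem_setOf_eq, Set.mem_singleton_iff]
    constructor
    · rintro rfl; exact ⟨[], rfl, GConnects.nil u⟩
    · rintro ⟨p, rfl, h⟩; cases h; rfl
  | sym a =>
    simp only [rpqSem, pathsOf, Set.mem_setOf_eq, Set.mem_singleton_iff]
    constructor
    · intro h; exact ⟨[a], rfl, GConnects.cons h (GConnects.nil v)⟩
    · rintro ⟨p, rfl, h⟩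
      cases h with
      | cons he h' => cases h'; exact he
  | union q₁ q₂ ih₁ ih₂ =>
    simp only [rpqSem, pathsOf, Set.mem_union, ih₁, ih₂]
    constructor
    · rintro (⟨p, hp, hc⟩ | ⟨p, hp, hc⟩)
      · exact ⟨p, Or.inl hp, hc⟩
      · exact ⟨p, Or.inr hp, hc⟩
    · rintro ⟨p, hp | hp, hc⟩
      · exact Or.inl ⟨p, hp, hc⟩
      · exact Or.inr ⟨p, hp, hc⟩
  | conc q₁ q₂ ih₁ ih₂ =>
    simp only [rpqSem, pathsOf, relComp, Set.mem_setOf_eq]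
    constructor
    · rintro ⟨m, h1, h2⟩
      obtain ⟨p₁, hp₁, hc₁⟩ := (ih₁ u m).1 h1
      obtain ⟨p₂, hp₂, hc₂⟩ := (ih₂ m v).1 h2
      exact ⟨p₁ ++ p₂, ⟨p₁, hp₁, p₂, hp₂, rfl⟩, GConnects_append hc₁ hc₂⟩
    · rintro ⟨p, ⟨p₁, hp₁, p₂, hp₂, rfl⟩, hc⟩
      obtain ⟨m, hm1, hm2⟩ := GConnects_append_split hc
      exact ⟨m, (ih₁ u m).2 ⟨p₁, hp₁, hm1⟩, (ih₂ m v).2 ⟨p₂, hp₂, hm2⟩⟩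
  | star q ih =>
    simp only [rpqSem, pathsOf, Set.mem_iUnion, Set.mem_setOf_eq]
    constructor
    · rintro ⟨i, hi⟩
      obtain ⟨l, hl, hc⟩ :=
        powRel_to_list (fun u v h => (ih u v).1 h) i u v hi
      exact ⟨l.flatten, ⟨l, hl, rfl⟩, hc⟩
    · rintro ⟨p, ⟨l, hl, rfl⟩, hc⟩
      exact list_to_powRel (fun p u v hp hc => (ih u v).2 ⟨p, hp, hc⟩) l u v hl hc

/-! #### Labels and typing -/

lemma mem_inLabels {V σ : Type} [DecidableEq V] {E : Finset (V × σ × V)}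
    {v : V} {a : σ} : a ∈ inLabels E v ↔ ∃ u, (u, a, v) ∈ E := by
  simp only [inLabels, Multiset.mem_map, Finset.mem_val, Finset.mem_filter]
  constructor
  · rintro ⟨⟨u, b, w⟩, ⟨hE, hw⟩, hb⟩
    cases hw; cases hb; exact ⟨u, hE⟩
  · rintro ⟨u, hu⟩
    exact ⟨(u, a, v), ⟨hu, rfl⟩, rfl⟩

lemma mem_outLabels {V σ : Type} [DecidableEq V] {E : Finset (V × σ × V)}
    {v : V} {a : σ} : a ∈ outLabels E v ↔ ∃ u, (v, a, u) ∈ E := by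
  simp only [outLabels, Multiset.mem_map, Finset.mem_val, Finset.mem_filter]
  constructor
  · rintro ⟨⟨w, b, u⟩, ⟨hE, hw⟩, hb⟩
    cases hw; cases hb; exact ⟨u, hE⟩
  · rintro ⟨u, hu⟩
    exact ⟨(v, a, u), ⟨hu, rfl⟩, rfl⟩

lemma mem_syms_of_mem_resem {σ : Type} [DecidableEq σ] {t : RE σ}
    {w : Multiset σ} (hw : w ∈ resem t) {a : σ} (ha : a ∈ w) : a ∈ syms t := by
  induction t generalizing w with
  | eps =>
    have hw' : w = 0 := hw
    subst hw'; simp at ha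
  | sym b =>
    have hw' : w = {b} := hw
    subst hw'
    simp only [Multiset.mem_singleton] at ha; subst ha; simp [syms]
  | union t₁ t₂ ih₁ ih₂ =>
    rcases hw with hw | hw
    · exact Finset.mem_union_left _ (ih₁ hw ha)
    · exact Finset.mem_union_right _ (ih₂ hw ha)
  | conc t₁ t₂ ih₁ ih₂ =>
    obtain ⟨w₁, h₁, w₂, h₂, rfl⟩ := hw
    rcases Multiset.mem_add.1 ha with ha | ha
    · exact Finset.mem_union_left _ (ih₁ h₁ ha)
    · exact Finset.mem_union_right _ (ih₂ h₂ ha)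
  | star b =>
    obtain ⟨n, rfl⟩ := hw
    rw [Multiset.eq_of_mem_replicate ha]; simp [syms]
  | plus b =>
    obtain ⟨n, _, rfl⟩ := hw
    rw [Multiset.eq_of_mem_replicate ha]; simp [syms]

/-! #### SConnects lemmas -/

lemma SConnects_append {σ : Type} [DecidableEq σ] {S : Finset (Elem σ)}
    {p₁ p₂ : List σ} {e₁ e e₂ : Elem σ} (h₁ : SConnects S p₁ e₁ e)
    (h₂ : SConnects S p₂ e e₂) : SConnects S (p₁ ++ p₂) e₁ e₂ := by
  induction h₁ with
  | nil => exact h₂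
  | cons hm ha₁ ha₂ _ ih => exact SConnects.cons hm ha₁ ha₂ (ih h₂)

lemma SConnects_split {σ : Type} [DecidableEq σ] {S : Finset (Elem σ)}
    {p₁ p₂ : List σ} {e₁ e₂ : Elem σ}
    (h : SConnects S (p₁ ++ p₂) e₁ e₂) :
    ∃ e, SConnects S p₁ e₁ e ∧ SConnects S p₂ e e₂ ∧ (e = e₁ ∨ e ∈ S) := by
  induction p₁ generalizing e₁ with
  | nil => exact ⟨e₁, SConnects.nil e₁, h, Or.inl rfl⟩
  | cons a p₁ ih =>
    cases h with
    | cons hm ha₁ ha₂ h' =>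
      obtain ⟨e, he1, he2, he3⟩ := ih h'
      refine ⟨e, SConnects.cons hm ha₁ ha₂ he1, he2, Or.inr ?_⟩
      rcases he3 with rfl | he3
      · exact hm
      · exact he3

lemma SConnects_mem {σ : Type} [DecidableEq σ] {S : Finset (Elem σ)}
    {p : List σ} {e₁ e₂ : Elem σ} (h : SConnects S p e₁ e₂) (h₁ : e₁ ∈ S) :
    e₂ ∈ S := by
  induction h with
  | nil => exact h₁
  | cons hm _ _ _ ih => exact ih hm

/-! #### Type inference lemmas -/

lemma spowRel_mem_S {σ : Type} {S : Finset (Elem σ)} {R : Set (Elem σ × Elem σ)}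
    (hR : ∀ x ∈ R, x.1 ∈ S ∧ x.2 ∈ S) {i : ℕ} {x : Elem σ × Elem σ}
    (h : x ∈ spowRel S R i) : x.1 ∈ S ∧ x.2 ∈ S := by
  induction i generalizing x with
  | zero =>
    obtain ⟨h1, h2⟩ := h
    exact ⟨h1, h2 ▸ h1⟩
  | succ i ih =>
    obtain ⟨m, h1, h2⟩ := h
    exact ⟨(ih h1).1, (hR _ h2).2⟩

lemma rpqInf_mem_S {σ : Type} [DecidableEq σ] {S : Finset (Elem σ)} {q : RPQ σ}
    {x : Elem σ × Elem σ} (h : x ∈ rpqInf S q) : x.1 ∈ S ∧ x.2 ∈ S := by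
  induction q generalizing x with
  | eps => obtain ⟨h1, h2⟩ := h; exact ⟨h1, h2 ▸ h1⟩
  | sym a => exact ⟨h.1, h.2.1⟩
  | union q₁ q₂ ih₁ ih₂ => rcases h with h | h; exacts [ih₁ h, ih₂ h]
  | conc q₁ q₂ ih₁ ih₂ =>
    obtain ⟨m, h1, h2⟩ := h
    exact ⟨(ih₁ h1).1, (ih₂ h2).2⟩
  | star q ih =>
    obtain ⟨i, hi⟩ := Set.mem_iUnion.1 h
    exact spowRel_mem_S (fun y hy => ih hy) hi

lemma spowRel_succ_left {σ : Type} {S : Finset (Elem σ)}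
    {R : Set (Elem σ × Elem σ)} (hR : ∀ x ∈ R, x.1 ∈ S ∧ x.2 ∈ S) (n : ℕ) :
    spowRel S R (n + 1) = relComp R (spowRel S R n) := by
  induction n with
  | zero =>
    ext ⟨x, y⟩
    show (∃ m, (x ∈ S ∧ x = m) ∧ (m, y) ∈ R) ↔ ∃ m, (x, m) ∈ R ∧ m ∈ S ∧ m = y
    constructor
    · rintro ⟨m, ⟨hx, rfl⟩, h⟩; exact ⟨y, h, (hR _ h).2, rfl⟩
    · rintro ⟨m, h, hm, rfl⟩; exact ⟨x, ⟨(hR _ h).1, rfl⟩, h⟩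
  | succ n ih =>
    show relComp (spowRel S R (n + 1)) R = relComp R (spowRel S R (n + 1))
    conv_lhs => rw [ih]
    rw [relComp_assoc]
    rfl

lemma spowRel_to_list {σ : Type} [DecidableEq σ] {S : Finset (Elem σ)}
    {R : Set (Elem σ × Elem σ)} {P : Set (List σ)}
    (h : ∀ x y : Elem σ, (x, y) ∈ R → ∃ p ∈ P, SConnects S p x y) :
    ∀ (i : ℕ) (e₁ e₂ : Elem σ), (e₁, e₂) ∈ spowRel S R i →
      ∃ l : List (List σ), (∀ x ∈ l, x ∈ P) ∧ SConnects S l.flatten e₁ e₂ := by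
  intro i
  induction i with
  | zero =>
    intro e₁ e₂ hx
    obtain ⟨h1, h2⟩ := hx
    cases h2
    exact ⟨[], by simp, SConnects.nil e₁⟩
  | succ i ih =>
    intro e₁ e₂ hx
    obtain ⟨m, h1, h2⟩ := hx
    obtain ⟨l, hl, hc⟩ := ih e₁ m h1
    obtain ⟨p, hp, hcp⟩ := h m e₂ h2
    refine ⟨l ++ [p], ?_, ?_⟩
    · intro x hx
      rcases List.mem_append.1 hx with hx | hx
      · exact hl x hx
      · simp only [List.mem_singleton] at hx; subst hx; exact hp
    · rw [List.flatten_append]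
      exact SConnects_append hc (SConnects_append hcp (SConnects.nil e₂))

lemma list_to_spowRel {σ : Type} [DecidableEq σ] {S : Finset (Elem σ)}
    {R : Set (Elem σ × Elem σ)} {P : Set (List σ)}
    (hR : ∀ x ∈ R, x.1 ∈ S ∧ x.2 ∈ S)
    (h : ∀ (p : List σ) (x y : Elem σ), p ∈ P → SConnects S p x y → x ∈ S →
      (x, y) ∈ R) :
    ∀ (l : List (List σ)) (e₁ e₂ : Elem σ), (∀ x ∈ l, x ∈ P) →
      SConnects S l.flatten e₁ e₂ → e₁ ∈ S → ∃ i, (e₁, e₂) ∈ spowRel S R i := by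
  intro l
  induction l with
  | nil =>
    intro e₁ e₂ _ hc h₁
    cases hc
    exact ⟨0, h₁, rfl⟩
  | cons hd l ih =>
    intro e₁ e₂ hl hc h₁
    rw [List.flatten_cons] at hc
    obtain ⟨e, he1, he2, he3⟩ := SConnects_split hc
    have heS : e ∈ S := by rcases he3 with rfl | he3; exacts [h₁, he3]
    obtain ⟨i, hi⟩ := ih e e₂ (fun x hx => hl x (by simp [hx])) he2 heS
    refine ⟨i + 1, ?_⟩
    rw [spowRel_succ_left hR]
    exact ⟨e, h hd e₁ e (hl hd (by simp)) he1 h₁, hi⟩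

/-- Soundness half: a schema path matching `q` yields an inferred pair. -/
lemma sconnects_to_inf {σ : Type} [DecidableEq σ] {S : Finset (Elem σ)}
    {q : RPQ σ} {p : List σ} {e₁ e₂ : Elem σ}
    (hp : p ∈ pathsOf q) (hc : SConnects S p e₁ e₂) (h₁ : e₁ ∈ S) :
    (e₁, e₂) ∈ rpqInf S q := by
  induction q generalizing p e₁ e₂ with
  | eps =>
    have hp' : p = [] := hp
    subst hp'
    cases hc
    exact ⟨h₁, rfl⟩
  | sym a =>
    have hp' : p = [a] := hp
    subst hp' 
    cases hc with
    | cons hm ha₁ ha₂ h' =>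
      cases h'
      exact ⟨h₁, hm, ha₁, ha₂⟩
  | union q₁ q₂ ih₁ ih₂ =>
    rcases hp with hp | hp
    · exact Or.inl (ih₁ hp hc h₁)
    · exact Or.inr (ih₂ hp hc h₁)
  | conc q₁ q₂ ih₁ ih₂ =>
    obtain ⟨p₁, hp₁, p₂, hp₂, rfl⟩ := hp
    obtain ⟨e, he1, he2, he3⟩ := SConnects_split hc
    have heS : e ∈ S := by rcases he3 with rfl | he3; exacts [h₁, he3]
    exact ⟨e, ih₁ hp₁ he1 h₁, ih₂ hp₂ he2 heS⟩
  | star q ih =>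
    obtain ⟨l, hl, rfl⟩ := hp
    rw [rpqInf, Set.mem_iUnion]
    exact list_to_spowRel (fun y hy => rpqInf_mem_S hy)
      (fun p x y hp hc hx => ih hp hc hx) l e₁ e₂ hl hc h₁

/-- Completeness half: an inferred pair yields a schema path matching `q`. -/
lemma inf_to_sconnects {σ : Type} [DecidableEq σ] {S : Finset (Elem σ)}
    {q : RPQ σ} {e₁ e₂ : Elem σ} (h : (e₁, e₂) ∈ rpqInf S q) :
    ∃ p ∈ pathsOf q, SConnects S p e₁ e₂ := by
  induction q generalizing e₁ e₂ with
  | eps =>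
    obtain ⟨h1, h2⟩ := h
    cases h2
    exact ⟨[], rfl, SConnects.nil e₁⟩
  | sym a =>
    obtain ⟨h1, h2, h3, h4⟩ := h
    exact ⟨[a], rfl, SConnects.cons h2 h3 h4 (SConnects.nil e₂)⟩
  | union q₁ q₂ ih₁ ih₂ =>
    rcases h with h | h
    · obtain ⟨p, hp, hc⟩ := ih₁ h; exact ⟨p, Or.inl hp, hc⟩
    · obtain ⟨p, hp, hc⟩ := ih₂ h; exact ⟨p, Or.inr hp, hc⟩
  | conc q₁ q₂ ih₁ ih₂ =>
    obtain ⟨m, h1, h2⟩ := h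
    obtain ⟨p₁, hp₁, hc₁⟩ := ih₁ h1
    obtain ⟨p₂, hp₂, hc₂⟩ := ih₂ h2
    exact ⟨p₁ ++ p₂, ⟨p₁, hp₁, p₂, hp₂, rfl⟩, SConnects_append hc₁ hc₂⟩
  | star q ih =>
    obtain ⟨i, hi⟩ := Set.mem_iUnion.1 h
    obtain ⟨l, hl, hc⟩ :=
      spowRel_to_list (fun x y hxy => ih hxy) i e₁ e₂ hi
    exact ⟨l.flatten, ⟨l, hl, rfl⟩, hc⟩

/-! #### The canonical graph -/

/-- All symbols mentioned by the doubly-normalized schema. -/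
def canonA {σ : Type} [DecidableEq σ] (S : Finset (Elem σ)) : Finset σ :=
  (DNorm S).biUnion (fun d => syms d.1 ∪ syms d.2)

/-- Edges of the canonical graph: all compatible triples. -/
def canonE {σ : Type} [DecidableEq σ] (S : Finset (Elem σ)) :
    Finset ({d : Elem σ // d ∈ DNorm S} × σ × {d : Elem σ // d ∈ DNorm S}) :=
  (Finset.univ ×ˢ canonA S ×ˢ Finset.univ).filter
    (fun t => t.2.1 ∈ syms t.1.val.2 ∧ t.2.1 ∈ syms t.2.2.val.1)

lemma mem_canonE {σ : Type} [DecidableEq σ] {S : Finset (Elem σ)}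
    {u v : {d : Elem σ // d ∈ DNorm S}} {a : σ} :
    (u, a, v) ∈ canonE S ↔ a ∈ syms u.val.2 ∧ a ∈ syms v.val.1 := by
  simp only [canonE, Finset.mem_filter, Finset.mem_product, Finset.mem_univ,
    true_and, and_true]
  constructor
  · rintro ⟨_, h⟩; exact h
  · rintro ⟨h1, h2⟩
    refine ⟨?_, h1, h2⟩
    exact Finset.mem_biUnion.2 ⟨u.val, u.2, Finset.mem_union_right _ h1⟩

lemma count_inLabels_canon {σ : Type} [DecidableEq σ] (S : Finset (Elem σ))
    (v : {d : Elem σ // d ∈ DNorm S}) (a : σ) :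
    (inLabels (canonE S) v).count a =
      if a ∈ syms v.val.1 then
        (Finset.univ.filter
          (fun u : {d : Elem σ // d ∈ DNorm S} => a ∈ syms u.val.2)).card
      else 0 := by
  rw [inLabels, Multiset.count_map]
  have h1 : Multiset.filter (fun t => a = t.2.1)
      ((canonE S).filter (fun t => t.2.2 = v)).val =
      ((canonE S).filter (fun t => t.2.2 = v ∧ a = t.2.1)).val := by
    simp only [Finset.filter_val, Multiset.filter_filter]
    exact Multiset.filter_congr (fun x _ => by tauto)
  rw [h1]
  show ((canonE S).filter (fun t => t.2.2 = v ∧ a = t.2.1)).card = _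
  by_cases ha : a ∈ syms v.val.1
  · rw [if_pos ha]
    have h2 : (canonE S).filter (fun t => t.2.2 = v ∧ a = t.2.1) =
        (Finset.univ.filter
          (fun u : {d : Elem σ // d ∈ DNorm S} => a ∈ syms u.val.2)).image
          (fun u => (u, a, v)) := by
      ext ⟨u, b, w⟩
      simp only [Finset.mem_filter, Finset.mem_image, Finset.mem_univ, true_and]
      constructor
      · rintro ⟨hE, rfl, rfl⟩
        exact ⟨u, (mem_canonE.1 hE).1, rfl⟩
      · rintro ⟨u', hu', heq⟩
        injection heq with h₁ h₂
        injection h₂ with h₂ h₃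
        subst h₁; subst h₂; subst h₃
        exact ⟨mem_canonE.2 ⟨hu', ha⟩, rfl, rfl⟩
    rw [h2]
    exact Finset.card_image_of_injective _ (fun x y hxy => by
      injection hxy)
  · rw [if_neg ha]
    rw [Finset.card_eq_zero, Finset.filter_eq_empty_iff]
    rintro ⟨u, b, w⟩ hE
    rintro ⟨rfl, rfl⟩
    exact ha (mem_canonE.1 hE).2

lemma count_outLabels_canon {σ : Type} [DecidableEq σ] (S : Finset (Elem σ))
    (v : {d : Elem σ // d ∈ DNorm S}) (a : σ) :
    (outLabels (canonE S) v).count a =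
      if a ∈ syms v.val.2 then
        (Finset.univ.filter
          (fun u : {d : Elem σ // d ∈ DNorm S} => a ∈ syms u.val.1)).card
      else 0 := by
  rw [outLabels, Multiset.count_map]
  have h1 : Multiset.filter (fun t => a = t.2.1)
      ((canonE S).filter (fun t => t.1 = v)).val =
      ((canonE S).filter (fun t => t.1 = v ∧ a = t.2.1)).val := by
    simp only [Finset.filter_val, Multiset.filter_filter]
    exact Multiset.filter_congr (fun x _ => by tauto)
  rw [h1]
  show ((canonE S).filter (fun t => t.1 = v ∧ a = t.2.1)).card = _
  by_cases ha : a ∈ syms v.val.2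
  · rw [if_pos ha]
    have h2 : (canonE S).filter (fun t => t.1 = v ∧ a = t.2.1) =
        (Finset.univ.filter
          (fun u : {d : Elem σ // d ∈ DNorm S} => a ∈ syms u.val.1)).image
          (fun u => (v, a, u)) := by
      ext ⟨u, b, w⟩
      simp only [Finset.mem_filter, Finset.mem_image, Finset.mem_univ, true_and]
      constructor
      · rintro ⟨hE, rfl, rfl⟩
        exact ⟨w, (mem_canonE.1 hE).2, rfl⟩
      · rintro ⟨u', hu', heq⟩
        injection heq with h₁ h₂
        injection h₂ with h₂ h₃
        subst h₁; subst h₂; subst h₃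
        exact ⟨mem_canonE.2 ⟨ha, hu'⟩, rfl, rfl⟩
    rw [h2]
    exact Finset.card_image_of_injective _ (fun x y hxy => by
      injection hxy with h₁ h₂; injection h₂)
  · rw [if_neg ha]
    rw [Finset.card_eq_zero, Finset.filter_eq_empty_iff]
    rintro ⟨u, b, w⟩ hE
    rintro ⟨rfl, rfl⟩
    exact ha (mem_canonE.1 hE).1

lemma producers_nonempty {σ : Type} [DecidableEq σ] {S : Finset (Elem σ)}
    (hS : IsSchema S) {v : {d : Elem σ // d ∈ DNorm S}} {a : σ}
    (ha : a ∈ syms v.val.1) :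
    ∃ u : {d : Elem σ // d ∈ DNorm S}, a ∈ syms u.val.2 := by
  obtain ⟨e, he, h1, _⟩ := mem_DNorm_iff.1 v.2
  have ha' : a ∈ syms e.1 := syms_clause_norm_subset h1 ha
  obtain ⟨e', he', ha''⟩ := hS.2.1 e he a ha'
  obtain ⟨c', hc', hac'⟩ := clauses_norm_cover ha''
  obtain ⟨c₀, hc₀⟩ := List.exists_mem_of_ne_nil _ (clauses_ne_nil (norm e'.1))
  exact ⟨⟨(c₀, c'), mem_DNorm_iff.2 ⟨e', he', hc₀, hc'⟩⟩, hac'⟩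

lemma consumers_nonempty {σ : Type} [DecidableEq σ] {S : Finset (Elem σ)}
    (hS : IsSchema S) {v : {d : Elem σ // d ∈ DNorm S}} {a : σ}
    (ha : a ∈ syms v.val.2) :
    ∃ u : {d : Elem σ // d ∈ DNorm S}, a ∈ syms u.val.1 := by
  obtain ⟨e, he, _, h2⟩ := mem_DNorm_iff.1 v.2
  have ha' : a ∈ syms e.2 := syms_clause_norm_subset h2 ha
  obtain ⟨e', he', ha''⟩ := hS.2.2.1 e he a ha'
  obtain ⟨c', hc', hac'⟩ := clauses_norm_cover ha''
  obtain ⟨c₀, hc₀⟩ := List.exists_mem_of_ne_nil _ (clauses_ne_nil (norm e'.2))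
  exact ⟨⟨(c', c₀), mem_DNorm_iff.2 ⟨e', he', hc', hc₀⟩⟩, hac'⟩

lemma canon_conforms {σ : Type} [DecidableEq σ] {S : Finset (Elem σ)}
    (hS : IsSchema S) (hwf : WellFormed S) : Conforms (canonE S) S := by
  intro v
  obtain ⟨e, he, h1, h2⟩ := mem_DNorm_iff.1 v.2
  obtain ⟨uf₁, cf₁⟩ := clauses_norm_good (hS.1 e he).1 _ h1
  obtain ⟨uf₂, cf₂⟩ := clauses_norm_good (hS.1 e he).2 _ h2
  refine ⟨e, he, ?_, ?_⟩
  · apply resem_clause_norm_subset h1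
    rw [mem_resem_iff_count uf₁]
    intro a
    rw [count_inLabels_canon]
    by_cases ha : a ∈ syms v.val.1
    · rw [if_pos ha]
      set P := Finset.univ.filter
        (fun u : {d : Elem σ // d ∈ DNorm S} => a ∈ syms u.val.2) with hP
      match hcard : P.card with
      | 0 =>
        exfalso
        obtain ⟨u, hu⟩ := producers_nonempty hS ha
        have : u ∈ P := by rw [hP]; simp [hu]
        have := Finset.card_pos.2 ⟨u, this⟩
        omega
      | 1 => exact one_mem_ivl uf₁ cf₁ ha
      | n + 2 =>
        have h2lt : 1 < P.card := by omega
        obtain ⟨u₁, hu₁, u₂, hu₂, hne⟩ := Finset.one_lt_card.1 h2lt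
        rw [hP, Finset.mem_filter] at hu₁ hu₂
        have hvne : u₁.val ≠ u₂.val := fun h => hne (Subtype.ext h)
        have hocc := hwf.1 a
          ⟨u₁.val, u₁.2, u₂.val, u₂.2, hvne, hu₁.2, hu₂.2⟩ v.val v.2
        exact mem_ivl_of_unstarred uf₁ cf₁ ha hocc _
    · rw [if_neg ha]
      exact zero_mem_ivl ha
  · apply resem_clause_norm_subset h2
    rw [mem_resem_iff_count uf₂]
    intro a
    rw [count_outLabels_canon]
    by_cases ha : a ∈ syms v.val.2
    · rw [if_pos ha]
      set P := Finset.univ.filter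
        (fun u : {d : Elem σ // d ∈ DNorm S} => a ∈ syms u.val.1) with hP
      match hcard : P.card with
      | 0 =>
        exfalso
        obtain ⟨u, hu⟩ := consumers_nonempty hS ha
        have : u ∈ P := by rw [hP]; simp [hu]
        have := Finset.card_pos.2 ⟨u, this⟩
        omega
      | 1 => exact one_mem_ivl uf₂ cf₂ ha
      | n + 2 =>
        have h2lt : 1 < P.card := by omega
        obtain ⟨u₁, hu₁, u₂, hu₂, hne⟩ := Finset.one_lt_card.1 h2lt
        rw [hP, Finset.mem_filter] at hu₁ hu₂
        have hvne : u₁.val ≠ u₂.val := fun h => hne (Subtype.ext h)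
        have hocc := hwf.2 a
          ⟨u₁.val, u₁.2, u₂.val, u₂.2, hvne, hu₁.2, hu₂.2⟩ v.val v.2
        exact mem_ivl_of_unstarred uf₂ cf₂ ha hocc _
    · rw [if_neg ha]
      exact zero_mem_ivl ha

/-- Realizing a schema path inside the canonical graph. -/
lemma canon_path {σ : Type} [DecidableEq σ] {S : Finset (Elem σ)}
    {p : List σ} {e₀ eₜ : Elem σ} (hc : SConnects S p e₀ eₜ) :
    e₀ ∈ S → ∀ c ∈ clauses (norm e₀.1),
      ∃ u v : {d : Elem σ // d ∈ DNorm S}, u.val.1 = c ∧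
        GConnects (edgeSet (canonE S)) p u v := by
  induction hc with
  | nil e =>
    intro h₀ c hcl
    obtain ⟨c₂, hc₂⟩ := List.exists_mem_of_ne_nil _ (clauses_ne_nil (norm e.2))
    exact ⟨⟨(c, c₂), mem_DNorm_iff.2 ⟨e, h₀, hcl, hc₂⟩⟩, _, rfl, GConnects.nil _⟩
  | @cons e₀ e eₜ a p hm ha₀ ha htail ih =>
    intro h₀ c hcl
    obtain ⟨cout, hcout, hacout⟩ := clauses_norm_cover ha₀
    obtain ⟨cin, hcin, hacin⟩ := clauses_norm_cover ha
    obtain ⟨u', v', hu'1, hconn⟩ := ih hm cin hcin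
    refine ⟨⟨(c, cout), mem_DNorm_iff.2 ⟨e₀, h₀, hcl, hcout⟩⟩, v', rfl,
      GConnects.cons ?_ hconn⟩
    exact Finset.mem_coe.2 (mem_canonE.2 ⟨hacout, hu'1.symm ▸ hacin⟩)

/-- Soundness of typing along graph paths. -/
lemma gconnects_to_sconnects {V σ : Type} [DecidableEq V] [DecidableEq σ]
    {E : Finset (V × σ × V)} {S : Finset (Elem σ)} (t : V → Elem σ)
    (htS : ∀ v, t v ∈ S) (hT : ∀ v, HasType E v (t v)) {p : List σ} {u v : V}
    (hg : GConnects (edgeSet E) p u v) : SConnects S p (t u) (t v) := by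
  induction hg with
  | nil u => exact SConnects.nil _
  | @cons u u' w a p he _ ih =>
    have heF : (u, a, u') ∈ E := he
    have ha_out : a ∈ outLabels E u := mem_outLabels.2 ⟨u', heF⟩
    have ha_in : a ∈ inLabels E u' := mem_inLabels.2 ⟨u, heF⟩
    exact SConnects.cons (htS u') (mem_syms_of_mem_resem (hT u).2 ha_out)
      (mem_syms_of_mem_resem (hT u').1 ha_in) ih

end Aux

/-- An RPQ is unsatisfiable over a well-formed schema iff its inferred type is
empty. -/
theorem rpq_unsat_iff_inf_empty {σ : Type} [DecidableEq σ]
    (S : Finset (Elem σ)) (hS : IsSchema S) (hwf : WellFormed S) (q : RPQ σ) :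
    (∀ (V : Type) (_ : DecidableEq V) (_ : Fintype V)
        (E : Finset (V × σ × V)), Conforms E S →
        rpqSem (edgeSet E) q = ∅) ↔ rpqInf S q = ∅ := by
  constructor
  · intro hall
    by_contra hne
    obtain ⟨⟨e₁, e₂⟩, hmem⟩ := Set.nonempty_iff_ne_empty.2 hne
    obtain ⟨p, hp, hc⟩ := inf_to_sconnects hmem
    have h₁ : e₁ ∈ S := (rpqInf_mem_S hmem).1
    obtain ⟨c, hcl⟩ := List.exists_mem_of_ne_nil _ (clauses_ne_nil (norm e₁.1))
    obtain ⟨u, v, _, hg⟩ := canon_path hc h₁ c hcl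
    have hsem : (u, v) ∈ rpqSem (edgeSet (canonE S)) q :=
      (rpqSem_iff_path _ _ _ _).2 ⟨p, hp, hg⟩
    rw [hall ({d : Elem σ // d ∈ DNorm S}) inferInstance inferInstance
      (canonE S) (canon_conforms hS hwf)] at hsem
    exact hsem
  · intro hinf V _ _ E hconf
    ext ⟨u, v⟩
    simp only [Set.mem_empty_iff_false, iff_false]
    intro hmem
    obtain ⟨p, hp, hg⟩ := (rpqSem_iff_path _ _ _ _).1 hmem
    choose t htS htT using hconf
    have hsc : SConnects S p (t u) (t v) :=
      gconnects_to_sconnects t htS htT hg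
    have := sconnects_to_inf hp hsc (htS u)
    rw [hinf] at this
    exact this
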